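/- Let (K,≿) be a coalition formation problem with unrestricted preferences. If there is an effective top-partition collection V, then the weak myopic core equals V. -/

import Mathlib

/-- A partition of the agent set `N`, encoded by the map sending each agent to her coalition. -/
structure Partn (N : Type*) where
  cell : N → Set N
  mem_cell : ∀ i, i ∈ cell i
  cell_eq : ∀ i j, j ∈ cell i → cell j = cell i

/-- Coalition `C` is formed in partition `π` (i.e. `C ∈ π`). -/
def Partn.HasCoal {N : Type*} (π : Partn N) (C : Set N) : Prop := ∃ i, π.cell i = C

/-- `D(π,π')`: agents placed in different coalitions by `π` and `π'`. -/
def Partn.diff {N : Type*} (π π' : Partn N) : Set N := {i | π.cell i ≠ π'.cell i}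

/-- A coalition formation problem: a set of admissible partitions together with
complete and transitive preferences of each agent over partitions. -/
structure CFP (N : Type*) where
  adm : Set (Partn N)
  pref : N → Partn N → Partn N → Prop
  total : ∀ i, ∀ π ∈ adm, ∀ π' ∈ adm, pref i π π' ∨ pref i π' π
  trans : ∀ i π π' π'', pref i π π' → pref i π' π'' → pref i π π''

namespace CFP
variable {N : Type*}

/-- Strict preference. -/
def spref (P : CFP N) (i : N) (π π' : Partn N) : Prop := P.pref i π π' ∧ ¬ P.pref i π' π

/-- Unrestricted domain condition: indifference only between partitions leaving
the agent in the same coalition. -/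
def NoTies (P : CFP N) : Prop :=
  ∀ i, ∀ π ∈ P.adm, ∀ π' ∈ P.adm, P.pref i π π' → P.pref i π' π → π.cell i = π'.cell i

/-- Order-preserving preferences. -/
def OrderPreserving (P : CFP N) : Prop :=
  P.NoTies ∧
  ∀ i, ∀ π ∈ P.adm, ∀ π' ∈ P.adm, ∀ τ ∈ P.adm, ∀ τ' ∈ P.adm,
    π.cell i ≠ π'.cell i → P.spref i π π' →
    τ.cell i = π.cell i → τ'.cell i = π'.cell i → P.spref i τ τ'

/-- `π` is myopically blocked by coalition `C` via `π'`. -/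
def Blocks (P : CFP N) (C : Set N) (π π' : Partn N) : Prop :=
  π ∈ P.adm ∧ π' ∈ P.adm ∧ C.Nonempty ∧
  (∀ i ∈ C, P.pref i π' π) ∧
  (∃ j ∈ C, P.spref j π' π) ∧
  (∀ j, j ∉ C → (π.cell j ∩ C).Nonempty → π'.cell j = {j}) ∧
  (∀ j, π.cell j ∩ C = ∅ → π'.cell j = π.cell j)

/-- The (myopic) core. -/
def Core (P : CFP N) : Set (Partn N) :=
  {π | π ∈ P.adm ∧ ¬ ∃ C π', P.Blocks C π π'}

/-- The set of (myopically) stable partitions. -/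
def StableSet (P : CFP N) : Set (Partn N) :=
  {π | π ∈ P.adm ∧ ¬ ∃ C π', P.Blocks C π π' ∧ π'.HasCoal C}

/-- `V` is a top-partition collection: it consists exactly of the `|V|`-best
partitions of every agent, i.e. every agent strictly prefers every member of `V`
to every admissible partition outside `V`. -/
def TopCollection (P : CFP N) (V : Set (Partn N)) : Prop :=
  V.Nonempty ∧ V ⊆ P.adm ∧
  ∀ i, ∀ π ∈ V, ∀ π' ∈ P.adm, π' ∉ V → P.spref i π π'

/-- Effectiveness of a top-partition collection. -/
def Effective (P : CFP N) (V : Set (Partn N)) : Prop :=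
  ∀ π ∈ V, ∀ π' ∈ V, π ≠ π' →
    ∃ S : Set N, S.Nonempty ∧ S ⊆ π.diff π' ∧ π.HasCoal S ∧ ∀ i ∈ S, P.spref i π π'

/-- Weak effectiveness of a top-partition collection. -/
def WeakEffective (P : CFP N) (V : Set (Partn N)) : Prop :=
  ∀ π ∈ V, ∀ π' ∈ V, π ≠ π' → ∀ C : Set N,
    π'.HasCoal C →
    (∀ i ∈ C, π'.cell i = C) →
    (∀ i, i ∉ C →
      (π.cell i ∩ C = ∅ → π'.cell i = π.cell i) ∧
      ((π.cell i ∩ C).Nonempty → π'.cell i = {i})) →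
    ∃ j ∈ C, P.spref j π π'

/-- Domination: `π'` dominates `π` iff some coalition formed in `π'` blocks `π` via `π'`. -/
def Dom (P : CFP N) (π' π : Partn N) : Prop :=
  ∃ C, P.Blocks C π π' ∧ π'.HasCoal C

/-- Absorbing set for the myopic domination relation. -/
def Absorbing (P : CFP N) (A : Set (Partn N)) : Prop :=
  A.Nonempty ∧ A ⊆ P.adm ∧
  ∀ π ∈ A, ∀ π' ∈ P.adm, π' ≠ π → (Relation.TransGen P.Dom π' π ↔ π' ∈ A)

/-- Weak-myopic blocking (condition (iii) of myopic blocking is dropped). -/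
def WeakBlocks (P : CFP N) (C : Set N) (π π' : Partn N) : Prop :=
  π ∈ P.adm ∧ π' ∈ P.adm ∧ C.Nonempty ∧
  (∀ i ∈ C, P.pref i π' π) ∧
  (∃ j ∈ C, P.spref j π' π) ∧
  (∀ j, π.cell j ∩ C = ∅ → π'.cell j = π.cell j)

/-- The weak myopic core. -/
def WeakCore (P : CFP N) : Set (Partn N) :=
  {π | π ∈ P.adm ∧ ¬ ∃ C π', P.WeakBlocks C π π'}

/-- `Q` is the problem without externalities induced by the order-preserving problem `P`. -/
def Induces (P Q : CFP N) : Prop :=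
  Q.adm = P.adm ∧
  ∀ i, ∀ π ∈ P.adm, ∀ π' ∈ P.adm,
    (π.cell i = π'.cell i → Q.pref i π π' ∧ Q.pref i π' π) ∧
    (π.cell i ≠ π'.cell i → (P.spref i π π' ↔ Q.spref i π π'))

/-- Prudent blocking: every member of `C` compares `π` with her *worst* partition
placing her in `π'`'s coalition (equivalently, with all such partitions). -/
def PrudentBlocks (P : CFP N) (C : Set N) (π π' : Partn N) : Prop :=
  π ∈ P.adm ∧ π' ∈ P.adm ∧ C.Nonempty ∧
  (∀ i ∈ C, ∀ τ ∈ P.adm, τ.cell i = π'.cell i → P.pref i τ π) ∧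
  (∃ j ∈ C, ∀ τ ∈ P.adm, τ.cell j = π'.cell j → P.spref j τ π)

/-- Optimistic blocking: every member of `C` compares `π` with her *best* partition
placing her in `π'`'s coalition (equivalently, with some such partition). -/
def OptBlocks (P : CFP N) (C : Set N) (π π' : Partn N) : Prop :=
  π ∈ P.adm ∧ π' ∈ P.adm ∧ C.Nonempty ∧
  (∀ i ∈ C, ∃ τ ∈ P.adm, τ.cell i = π'.cell i ∧ P.pref i τ π) ∧
  (∃ j ∈ C, ∃ τ ∈ P.adm, τ.cell j = π'.cell j ∧ P.spref j τ π)

def PrudentDom (P : CFP N) (π' π : Partn N) : Prop :=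
  ∃ C, P.PrudentBlocks C π π' ∧ π'.HasCoal C

def OptDom (P : CFP N) (π' π : Partn N) : Prop :=
  ∃ C, P.OptBlocks C π π' ∧ π'.HasCoal C

def PrudentAbsorbing (P : CFP N) (A : Set (Partn N)) : Prop :=
  A.Nonempty ∧ A ⊆ P.adm ∧
  ∀ π ∈ A, ∀ π' ∈ P.adm, π' ≠ π → (Relation.TransGen P.PrudentDom π' π ↔ π' ∈ A)

def OptAbsorbing (P : CFP N) (A : Set (Partn N)) : Prop :=
  A.Nonempty ∧ A ⊆ P.adm ∧
  ∀ π ∈ A, ∀ π' ∈ P.adm, π' ≠ π → (Relation.TransGen P.OptDom π' π ↔ π' ∈ A)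

end CFP


/-!
Outside `V`, every agent strictly prefers any member of `V`, so the grand coalition weakly
blocks each admissible partition not in `V`. Conversely, a partition `π ∈ V` can only be
weakly blocked via some `π' ∈ V` (a blocker weakly prefers `π'`, which rules out `π' ∉ V`),
and effectiveness yields a coalition `S ∈ π` all of whose members strictly prefer `π`: it
is disjoint from the blocking coalition, hence kept in `π'`, contradicting `S ⊆ D(π, π')`.
-/

namespace Partn

variable {N : Type*}

theorem cell_eq_of_hasCoal {π : Partn N} {S : Set N} (hS : π.HasCoal S) {s : N} (hs : s ∈ S) :
    π.cell s = S := by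
  obtain ⟨k, rfl⟩ := hS
  exact π.cell_eq k s hs

instance [IsEmpty N] : Subsingleton (Partn N) where
  allEq π π' := by
    cases π; cases π'
    congr
    exact funext isEmptyElim

end Partn

namespace CFP

variable {N : Type*} {P : CFP N} {V : Set (Partn N)}

theorem TopCollection.weakBlocks_univ [Nonempty N] (hV : P.TopCollection V)
    {π σ : Partn N} (hπ : π ∈ P.adm) (hπV : π ∉ V) (hσ : σ ∈ V) :
    P.WeakBlocks Set.univ π σ := by
  obtain ⟨_, hVadm, htop⟩ := hV
  obtain ⟨j⟩ := ‹Nonempty N›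
  refine ⟨hπ, hVadm hσ, Set.univ_nonempty, fun i _ => (htop i σ hσ π hπ hπV).1,
    ⟨j, trivial, htop j σ hσ π hπ hπV⟩, fun k hk => ?_⟩
  rw [Set.inter_univ] at hk
  exact absurd hk (Set.nonempty_of_mem (π.mem_cell k)).ne_empty

theorem TopCollection.mem_of_weakBlocks (hV : P.TopCollection V) {C : Set N}
    {π π' : Partn N} (hπ : π ∈ V) (hb : P.WeakBlocks C π π') : π' ∈ V := by
  obtain ⟨_, hadm', ⟨c, hc⟩, hpref, -⟩ := hb
  by_contra hπ'
  exact (hV.2.2 c π hπ π' hadm' hπ').2 (hpref c hc)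

theorem Effective.not_weakBlocks (he : P.Effective V) {C : Set N} {π π' : Partn N}
    (hπ : π ∈ V) (hπ' : π' ∈ V) : ¬ P.WeakBlocks C π π' := by
  rintro ⟨-, -, -, hpref, ⟨j, -, hj⟩, hkeep⟩
  obtain rfl | hne := eq_or_ne π' π
  · exact hj.2 hj.1
  obtain ⟨S, ⟨s, hs⟩, hSdiff, hScoal, hSpref⟩ := he π hπ π' hπ' hne.symm
  have hdisj : π.cell s ∩ C = ∅ := by
    rw [Partn.cell_eq_of_hasCoal hScoal hs, Set.eq_empty_iff_forall_notMem]
    exact fun x ⟨hxS, hxC⟩ => (hSpref x hxS).2 (hpref x hxC)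
  exact hSdiff hs (hkeep s hdisj).symm

theorem TopCollection.subset_weakCore (hV : P.TopCollection V) (he : P.Effective V) :
    V ⊆ P.WeakCore := fun _ hπ =>
  ⟨hV.2.1 hπ, fun ⟨_, _, hb⟩ => he.not_weakBlocks hπ (hV.mem_of_weakBlocks hπ hb) hb⟩

theorem TopCollection.weakCore_subset (hV : P.TopCollection V) : P.WeakCore ⊆ V := by
  rintro π ⟨hπ, hnb⟩
  obtain ⟨σ, hσ⟩ := hV.1
  by_contra hπV
  cases isEmpty_or_nonempty N
  · exact hπV (Subsingleton.elim σ π ▸ hσ)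
  · exact hnb ⟨_, _, hV.weakBlocks_univ hπ hπV hσ⟩

end CFP

theorem weakCore_eq_top_collection_general {N : Type*} (P : CFP N)
    (V : Set (Partn N)) (hV : P.TopCollection V) (he : P.Effective V) :
    P.WeakCore = V :=
  hV.weakCore_subset.antisymm (hV.subset_weakCore he)

theorem weakCore_eq_top_collection {N : Type*} (P : CFP N) (hP : P.NoTies)
    (V : Set (Partn N)) (hV : P.TopCollection V) (he : P.Effective V) :
    P.WeakCore = V :=
  weakCore_eq_top_collection_general P V hV he
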